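/- Let α be an irrational real number and let T_α be the graphing on the unit interval [0, 1) with the Borel σ-algebra and Lebesgue measure λ, generated by the translation t_α : x ↦ x + α (mod 1). Then every Borel matching of T_α misses a set of vertices of positive Lebesgue measure; consequently, the measurable chromatic index of T_α is strictly greater than 2. -/

import Mathlib

open MeasureTheory Set
open scoped ENNReal

namespace CLP

universe u

variable {V : Type u}

/-- The set of neighbours of `x` in the (symmetric) edge set `E ⊆ V × V`. -/
def nbrs (E : Set (V × V)) (x : V) : Set V := {y | (x, y) ∈ E}

/-- The number of edges from `x` into the set `Y`. -/
noncomputable def degIn (E : Set (V × V)) (Y : Set V) (x : V) : ℕ := (nbrs E x ∩ Y).ncard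

/-- The edge set is symmetric. -/
def IsSymm (E : Set (V × V)) : Prop := ∀ x y : V, (x, y) ∈ E → (y, x) ∈ E

/-- The edge set is irreflexive (no loops). -/
def Irrefl (E : Set (V × V)) : Prop := ∀ x : V, (x, x) ∉ E

/-- Every vertex has finitely many neighbours, at most `d` of them. -/
def MaxDegLE (E : Set (V × V)) (d : ℕ) : Prop :=
  ∀ x : V, (nbrs E x).Finite ∧ (nbrs E x).ncard ≤ d

/-- A matching: a symmetric set of pairwise disjoint edges. -/
def IsMatching (M : Set (V × V)) : Prop :=
  IsSymm M ∧ ∀ x y z : V, (x, y) ∈ M → (x, z) ∈ M → y = z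

/-- The set of vertices covered by at least one edge of `M`. -/
def coveredVerts (M : Set (V × V)) : Set V := {x | ∃ y, (x, y) ∈ M}

/-- `WalkLen E n x y`: there is a walk of length exactly `n` from `x` to `y` in `E`. -/
def WalkLen (E : Set (V × V)) : ℕ → V → V → Prop
  | 0, x, y => x = y
  | n + 1, x, y => ∃ z, (x, z) ∈ E ∧ WalkLen E n z y

/-- Graph distance between `x` and `y` is at most `r`. -/
def DistLE (E : Set (V × V)) (r : ℕ) (x y : V) : Prop := ∃ n ≤ r, WalkLen E n x y

/-- `x` and `y` lie in the same connectivity component. -/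
def Reach (E : Set (V × V)) (x y : V) : Prop := ∃ n, WalkLen E n x y

/-- The connectivity component of `x`. -/
def component (E : Set (V × V)) (x : V) : Set V := {y | Reach E x y}

/-- A set `X` of vertices is `r`-sparse: distinct vertices of `X` are at distance `> r`. -/
def RSparse (E : Set (V × V)) (r : ℕ) (X : Set V) : Prop :=
  ∀ x ∈ X, ∀ y ∈ X, x ≠ y → ¬ DistLE E r x y

/-- A set `Q` of vertices is `r`-dense: every vertex is at distance at most `r` from `Q`. -/
def RDense (E : Set (V × V)) (r : ℕ) (Q : Set V) : Prop :=
  ∀ x : V, ∃ y ∈ Q, DistLE E r x y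

/-- The graph has no odd cycles, i.e. no closed walk of odd length. -/
def NoOddCycles (E : Set (V × V)) : Prop :=
  ∀ (n : ℕ) (x : V), ¬ WalkLen E (2 * n + 1) x x

/-- An invertible Borel bijection between Borel subsets of `V` preserving the measure `μ`. -/
structure PartialMPB [MeasurableSpace V] (μ : Measure V) where
  Dom : Set V
  Ran : Set V
  measDom : MeasurableSet Dom
  measRan : MeasurableSet Ran
  toFun : V → V
  invFun : V → V
  meas_toFun : Measurable toFun
  meas_invFun : Measurable invFun
  mapsTo : MapsTo toFun Dom Ran
  mapsTo_inv : MapsTo invFun Ran Dom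
  left_inv : ∀ x ∈ Dom, invFun (toFun x) = x
  right_inv : ∀ y ∈ Ran, toFun (invFun y) = y
  measure_preserving : ∀ S ⊆ Dom, MeasurableSet S → μ (toFun '' S) = μ S

/-- The maps `φ i` generate the edge set `E`:
`{x, y} ∈ E` iff `x ≠ y` and some `φ i` maps `x` to `y` or `y` to `x`. -/
def Generates [MeasurableSpace V] {μ : Measure V} {k : ℕ}
    (φ : Fin k → PartialMPB μ) (E : Set (V × V)) : Prop :=
  ∀ x y : V, (x, y) ∈ E ↔ x ≠ y ∧ ∃ i : Fin k,
    (x ∈ (φ i).Dom ∧ (φ i).toFun x = y) ∨ (y ∈ (φ i).Dom ∧ (φ i).toFun y = x)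

/-- A graphing (measure-preserving graph) on the measurable space `V`. -/
structure Graphing (V : Type u) [MeasurableSpace V] where
  μ : Measure V
  prob : IsProbabilityMeasure μ
  E : Set (V × V)
  measE : MeasurableSet E
  symm : IsSymm E
  irrefl : Irrefl E
  bddDeg : ∃ d : ℕ, MaxDegLE E d
  gen : ∃ (k : ℕ) (φ : Fin k → PartialMPB μ), Generates φ E

/-- The measurable chromatic index of `(E, μ)` is at most `c`: there is a Borel partition
`E = E₀ ∪ E₁ ∪ ⋯ ∪ E_c` where `E₁, …, E_c` are matchings and the set of vertices covered
by `E₀` is `μ`-null. -/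
def ChromIndexLE [MeasurableSpace V] (μ : Measure V) (E : Set (V × V)) (c : ℕ) : Prop :=
  ∃ F : Fin (c + 1) → Set (V × V),
    (∀ i, MeasurableSet (F i)) ∧
    (∀ i, IsSymm (F i)) ∧
    (⋃ i, F i) = E ∧
    (∀ i j, i ≠ j → Disjoint (F i) (F j)) ∧
    (∀ i, i ≠ 0 → IsMatching (F i)) ∧
    μ (coveredVerts (F 0)) = 0

/-! ### Finite graphs, edge colorings and the function `f` -/

/-- A proper edge coloring of the (symmetric) edge set `E`: it is symmetric on `E` and
adjacent edges receive distinct colors. -/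
def ProperEdgeColoring (E : Set (V × V)) (c : V × V → ℕ) : Prop :=
  (∀ x y : V, (x, y) ∈ E → c (x, y) = c (y, x)) ∧
  (∀ x y z : V, (x, y) ∈ E → (x, z) ∈ E → y ≠ z → c (x, y) ≠ c (x, z))

/-- A leaf: an edge one of whose endpoints has degree 1. -/
def IsLeafEdge (E : Set (V × V)) (q : V × V) : Prop :=
  q ∈ E ∧ ((nbrs E q.1).ncard = 1 ∨ (nbrs E q.2).ncard = 1)

/-- The extension property behind the definition of `f`: in every finite graph
with all degrees at most `d` except at most one vertex of degree `d + 1`, every proper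
pre-coloring of at most `d - 1` leaves (counted as `2 * (d - 1)` ordered pairs) extends to a
proper edge coloring of the whole graph using at most `d + fv` colors. -/
def PreColorExt (d fv : ℕ) : Prop :=
  ∀ (W : Type) (E : Set (W × W)), Finite W → IsSymm E → Irrefl E →
    MaxDegLE E (d + 1) →
    (∀ x y : W, d < (nbrs E x).ncard → d < (nbrs E y).ncard → x = y) →
    ∀ (L : Set (W × W)) (p : W × W → ℕ),
      L ⊆ E → IsSymm L → (∀ q ∈ L, IsLeafEdge E q) → L.ncard ≤ 2 * (d - 1) →
      ProperEdgeColoring L p →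
      ∃ c : W × W → ℕ, ProperEdgeColoring E c ∧ (∀ q ∈ L, c q = p q) ∧
        (c '' E).ncard ≤ d + fv

/-- `fDef k` is the least `f` such that `PreColorExt d f` holds for all `1 ≤ d ≤ k`. -/
noncomputable def fDef (k : ℕ) : ℕ :=
  sInf {fv : ℕ | ∀ d : ℕ, 1 ≤ d → d ≤ k → PreColorExt d fv}


/-- The edge set of the translation graphing `T_α` on the circle `ℝ/ℤ`:
`x` and `y` are adjacent iff `y = x + α` or `y = x - α` (mod 1). -/
def circleEdges (α : ℝ) : Set (UnitAddCircle × UnitAddCircle) :=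
  {p | p.2 = p.1 + (α : UnitAddCircle) ∨ p.2 = p.1 - (α : UnitAddCircle)}

/-! Put `β = α mod 1`; then `2β` has infinite order, so the rotation by `2β` is ergodic. If a
Borel matching `M` covered almost every point, the set `A` of points matched forward, to `x + β`,
would satisfy `A - β = Aᶜ` a.e.: the point `x + β` is matched to `x` or to `x + 2β`, and not to
both since `2β ≠ 0`. Then `A` is invariant under the rotation by `2β`, hence null or conull, and
so is `Aᶜ = A - β`, which is absurd. A Borel edge colouring with two matchings up to a null set
would give such a matching: almost every `x` has its two edges, to `x ± β`, in the two colour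
classes, so the first colour class covers almost every point. -/

open Function

section Ergodicity

variable {X : Type*} [MeasurableSpace X] {μ : Measure X} {T : X → X}

theorem not_preimage_ae_eq_compl [NeZero μ] (hT : Measure.QuasiMeasurePreserving T μ μ)
    (hT2 : QuasiErgodic (T ∘ T) μ) {s : Set X} (hs : NullMeasurableSet s μ) :
    ¬ T ⁻¹' s =ᵐ[μ] sᶜ := by
  intro h
  have hinv : (T ∘ T) ⁻¹' s =ᵐ[μ] s := (hT.preimage_ae_eq h).trans (ae_eq_set_compl.mpr h)
  rcases hT2.ae_empty_or_univ₀ hs hinv with h0 | h0 <;>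
  · have hself := (hT.preimage_ae_eq h0).symm.trans (h.trans h0.compl)
    exact NeZero.ne μ (by simpa using hself)

end Ergodicity

theorem IsMatching.eq_of_mem_of_mem {M : Set (V × V)} (hM : IsMatching M)
    {x y z : V} (hxy : (x, y) ∈ M) (hyz : (y, z) ∈ M) : z = x :=
  hM.2 y z x hyz (hM.1 x y hxy)

section Translation

variable {G : Type*} [AddCommGroup G] {β : G} {M : Set (G × G)}

def translationEdges (β : G) : Set (G × G) := {p | p.2 = p.1 + β ∨ p.2 = p.1 - β}

theorem add_ne_sub_of_add_self_ne_zero (hβ : β + β ≠ 0) (x : G) : x + β ≠ x - β := by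
  rwa [ne_eq, sub_eq_add_neg, add_right_inj, eq_neg_iff_add_eq_zero]

theorem IsMatching.add_add_mem_iff_notMem (hM : IsMatching M) (hME : M ⊆ translationEdges β)
    (hβ : β + β ≠ 0) {x : G}
    (hx : x + β ∈ coveredVerts M) : (x + β, x + β + β) ∈ M ↔ (x, x + β) ∉ M := by
  constructor
  · intro hnext hcur
    apply hβ
    simpa [add_assoc] using hM.eq_of_mem_of_mem hcur hnext
  · intro hcur
    obtain ⟨y, hy⟩ := hx
    rcases hME hy with hy' | hy' <;> simp only at hy' <;> subst hy'
    · exact hy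
    · exact absurd (hM.1 _ _ (by simpa using hy)) hcur

theorem preimage_add_right_ae_eq_compl [MeasurableSpace G] [MeasurableAdd G] {μ : Measure G}
    [μ.IsAddRightInvariant] (hβ : β + β ≠ 0) (hME : M ⊆ translationEdges β)
    (hM : IsMatching M) (hcov : μ {x | x ∉ coveredVerts M} = 0) :
    (· + β) ⁻¹' {x | (x, x + β) ∈ M} =ᵐ[μ] {x | (x, x + β) ∈ M}ᶜ := by
  have hshift : ∀ᵐ x ∂μ, x + β ∈ coveredVerts M :=
    (measurePreserving_add_right μ β).quasiMeasurePreserving.ae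
      (by simpa using measure_eq_zero_iff_ae_notMem.mp hcov)
  filter_upwards [hshift] with x hx
  exact propext (hM.add_add_mem_iff_notMem hME hβ hx)

end Translation

theorem exists_measurable_matching_of_chromIndexLE_two [MeasurableSpace V]
    {μ : Measure V} {E : Set (V × V)} (hE : ∀ x, ∃ y z, y ≠ z ∧ (x, y) ∈ E ∧ (x, z) ∈ E)
    (h : ChromIndexLE μ E 2) :
    ∃ M ⊆ E, MeasurableSet M ∧ IsMatching M ∧ μ {x | x ∉ coveredVerts M} = 0 := by
  obtain ⟨F, hFm, -, hFE, -, hF, hF0⟩ := h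
  refine ⟨F 1, hFE ▸ subset_iUnion F 1, hFm 1, hF 1 (by decide), measure_mono_null ?_ hF0⟩
  intro x hx1
  by_contra hx0
  have hcolor : ∀ k w, (x, w) ∈ F k → k = 2 := by
    intro k w hw
    fin_cases k
    exacts [(hx0 ⟨w, hw⟩).elim, (hx1 ⟨w, hw⟩).elim, rfl]
  obtain ⟨y, z, hyz, hy, hz⟩ := hE x
  rw [← hFE, mem_iUnion] at hy hz
  obtain ⟨i, hi⟩ := hy
  obtain ⟨j, hj⟩ := hz
  obtain rfl := hcolor i y hi
  obtain rfl := hcolor j z hj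
  exact hyz ((hF 2 (by decide)).2 x y z hi hj)

theorem addOrderOf_coe_add_self_eq_zero {α : ℝ} (hα : Irrational α) :
    addOrderOf ((α : UnitAddCircle) + α) = 0 := by
  rw [← AddCircle.denseRange_zsmul_iff, ← AddCircle.coe_add, AddCircle.denseRange_zsmul_coe_iff,
    div_one, ← two_mul]
  exact hα.natCast_mul two_ne_zero

theorem coe_add_self_ne_zero {α : ℝ} (hα : Irrational α) : (α : UnitAddCircle) + α ≠ 0 := by
  intro h
  simpa [h] using addOrderOf_coe_add_self_eq_zero hα

theorem volume_not_coveredVerts_pos {α : ℝ} (hα : Irrational α)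
    {M : Set (UnitAddCircle × UnitAddCircle)} (hME : M ⊆ circleEdges α) (hMm : MeasurableSet M)
    (hM : IsMatching M) : 0 < volume {x : UnitAddCircle | x ∉ coveredVerts M} := by
  set β : UnitAddCircle := (α : UnitAddCircle)
  refine pos_iff_ne_zero.mpr fun hcov => ?_
  have herg : Ergodic ((· + β) ∘ (· + β)) volume := by
    simpa only [comp_def, add_assoc] using
      AddCircle.ergodic_add_right.mpr (addOrderOf_coe_add_self_eq_zero hα)
  exact not_preimage_ae_eq_compl (measurePreserving_add_right volume β).quasiMeasurePreserving
    herg.quasiErgodic (hMm.preimage (by fun_prop)).nullMeasurableSet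
    (preimage_add_right_ae_eq_compl (coe_add_self_ne_zero hα) hME hM hcov)

/-- For irrational `α`, every Borel matching of the translation graphing
`T_α` misses a set of vertices of positive Lebesgue measure; consequently the measurable
chromatic index of `T_α` is strictly greater than `2`. -/
theorem translation_graphing_no_ae_perfect_matching (α : ℝ) (hα : Irrational α) :
    (∀ M : Set (UnitAddCircle × UnitAddCircle),
      M ⊆ circleEdges α → MeasurableSet M → IsMatching M →
      0 < volume {x : UnitAddCircle | x ∉ coveredVerts M}) ∧
    ¬ ChromIndexLE (volume : Measure UnitAddCircle) (circleEdges α) 2 := by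
  refine ⟨fun M => volume_not_coveredVerts_pos hα, fun hχ => ?_⟩
  have hnbrs (x : UnitAddCircle) : ∃ y z, y ≠ z ∧ (x, y) ∈ circleEdges α ∧ (x, z) ∈ circleEdges α :=
    ⟨_, _, add_ne_sub_of_add_self_ne_zero (coe_add_self_ne_zero hα) x, Or.inl rfl, Or.inr rfl⟩
  obtain ⟨M, hME, hMm, hM, hcov⟩ := exists_measurable_matching_of_chromIndexLE_two hnbrs hχ
  exact (volume_not_coveredVerts_pos hα hME hMm hM).ne' hcov

end CLP
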